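/- arXiv:1405.6741 — 3 statements merged into one kernel-verified Lean document; each statement's English description precedes it below -/
import Mathlib

section
/- Every 2^n × 2^n diagonal matrix D with diagonal entries in {+1, -1} and first diagonal entry D_{00} = +1 (indexing diagonal entries by bit vectors, with 0 the all-false vector) can be written as a product of distinct multiple-controlled Z gates CZ_S over some set of nonempty subsets S ⊆ {0,...,n-1}. -/
/-- The multiple-controlled `Z` gate on the set `S` of qubits. -/
def CZ {n : ℕ} (S : Finset (Fin n)) : Matrix (Fin n → Bool) (Fin n → Bool) ℂ :=
  Matrix.diagonal (fun x => if ∀ j ∈ S, x j = true then -1 else 1)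

/-- Any two multiple-controlled `Z` gates commute. -/
theorem CZ_commute {n : ℕ} (S T : Finset (Fin n)) : Commute (CZ S) (CZ T) := by
  unfold CZ
  simp only [Commute, SemiconjBy, Matrix.diagonal_mul_diagonal, mul_comm]

lemma sum_powerset_insert {α M : Type*} [DecidableEq α] [AddCommMonoid M]
    {a : α} {s : Finset α} (ha : a ∉ s) (F : Finset α → M) :
    ∑ S ∈ (insert a s).powerset, F S
      = (∑ S ∈ s.powerset, F S) + ∑ S ∈ s.powerset, F (insert a S) := by
  rw [Finset.powerset_insert, Finset.sum_union, Finset.sum_image]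
  · intro x hx y hy hxy
    have hx' : a ∉ x := fun h => ha (Finset.mem_powerset.mp hx h)
    have hy' : a ∉ y := fun h => ha (Finset.mem_powerset.mp hy h)
    have := congrArg (Finset.erase · a) hxy
    simpa [Finset.erase_insert hx', Finset.erase_insert hy'] using this
  · rw [Finset.disjoint_right]
    rintro T hT hT'
    obtain ⟨u, hu, rfl⟩ := Finset.mem_image.mp hT
    exact ha (Finset.mem_powerset.mp hT' (Finset.mem_insert_self a u))

/-- Möbius inversion mod 2 over the powerset. -/
lemma mob {α : Type*} [DecidableEq α] (f : Finset α → ZMod 2) (X : Finset α) :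
    ∑ S ∈ X.powerset, ∑ T ∈ S.powerset, f T = f X := by
  induction X using Finset.induction_on generalizing f with
  | empty => simp
  | @insert a s ha ih =>
    rw [sum_powerset_insert ha]
    have h1 : ∀ S ∈ s.powerset, ∑ T ∈ (insert a S).powerset, f T
        = (∑ T ∈ S.powerset, f T) + ∑ T ∈ S.powerset, f (insert a T) := by
      intro S hS
      exact sum_powerset_insert (fun h => ha (Finset.mem_powerset.mp hS h)) f
    rw [Finset.sum_congr rfl h1, Finset.sum_add_distrib]
    have h2 : ∑ S ∈ s.powerset, ∑ T ∈ S.powerset, f (insert a T)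
        = f (insert a s) := ih (fun T => f (insert a T))
    rw [h2]
    have : (∑ S ∈ s.powerset, ∑ T ∈ S.powerset, f T)
        + (∑ S ∈ s.powerset, ∑ T ∈ S.powerset, f T) = 0 := by
      rw [CharTwo.add_self_eq_zero]
    rw [← add_assoc, this, zero_add]

/-- Every `2^n × 2^n` diagonal matrix with ±1 diagonal entries and entry `+1` at the
all-false index can be written as a product of distinct multiple-controlled `Z` gates
`CZ S` over some set of nonempty subsets `S` of the qubits. -/
theorem diagonal_pm_one_eq_prod_CZ {n : ℕ} (d : (Fin n → Bool) → ℂ)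
    (hd : ∀ x, d x = 1 ∨ d x = -1) (h0 : d (fun _ => false) = 1) :
    ∃ 𝒜 : Finset {S : Finset (Fin n) // S.Nonempty},
      Matrix.diagonal d =
        𝒜.noncommProd (fun S => CZ S.1) (fun S _ T _ _ => CZ_commute S.1 T.1) := by
  classical
  set ε : Finset (Fin n) → ZMod 2 :=
    fun T => if d (fun j => decide (j ∈ T)) = 1 then 0 else 1 with hε
  set c : Finset (Fin n) → ZMod 2 := fun S => ∑ T ∈ S.powerset, ε T with hc
  have hε0 : ε ∅ = 0 := by
    simp only [hε, Finset.notMem_empty, decide_eq_true_eq]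
    simpa using h0
  have hc0 : c ∅ = 0 := by simp [hc, hε0]
  refine ⟨Finset.univ.filter (fun S => c S.1 = 1), ?_⟩
  -- rewrite the noncommProd as a diagonal matrix
  set 𝒜 : Finset {S : Finset (Fin n) // S.Nonempty} :=
    Finset.univ.filter (fun S => c S.1 = 1) with h𝒜
  have key : 𝒜.noncommProd (fun S => CZ S.1) (fun S _ T _ _ => CZ_commute S.1 T.1)
      = Matrix.diagonal (fun x => ∏ S ∈ 𝒜, if ∀ j ∈ S.1, x j = true then (-1 : ℂ) else 1) := by
    have e := Finset.map_noncommProd 𝒜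
      (fun (S : {S : Finset (Fin n) // S.Nonempty}) (x : Fin n → Bool) =>
        if ∀ j ∈ S.1, x j = true then (-1 : ℂ) else 1)
      (fun _ _ _ _ _ => Commute.all _ _) (Matrix.diagonalRingHom (Fin n → Bool) ℂ)
    rw [Finset.noncommProd_eq_prod] at e
    refine Eq.trans e.symm ?_
    show Matrix.diagonal _ = _
    rw [Matrix.diagonal_eq_diagonal_iff]
    intro x
    rw [Finset.prod_apply]
  rw [key, Matrix.diagonal_eq_diagonal_iff]
  intro x
  -- let X be the support of x
  set X : Finset (Fin n) := Finset.univ.filter (fun j => x j = true) with hX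
  have hxX : (fun j => decide (j ∈ X)) = x := by
    funext j; simp [hX]
  have hcond : ∀ S : Finset (Fin n), (∀ j ∈ S, x j = true) ↔ S ⊆ X := by
    intro S
    constructor
    · intro h j hj; simp [hX, h j hj]
    · intro h j hj; have := h hj; simpa [hX] using this
  have hprod : (∏ S ∈ 𝒜, if ∀ j ∈ S.1, x j = true then (-1 : ℂ) else 1)
      = (-1 : ℂ) ^ (𝒜.filter (fun S => S.1 ⊆ X)).card := by
    rw [Finset.prod_congr rfl (fun S _ => by rw [if_congr (hcond S.1) rfl rfl])]
    rw [Finset.prod_ite, Finset.prod_const, Finset.prod_const, one_pow, mul_one]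
  rw [hprod]
  -- card equality with the powerset filter
  have hcard : (𝒜.filter (fun S => S.1 ⊆ X)).card
      = (X.powerset.filter (fun S => c S = 1)).card := by
    apply Finset.card_bij (fun S _ => S.1)
    · intro S hS
      simp only [Finset.mem_filter, Finset.mem_powerset]
      simp only [h𝒜, Finset.mem_filter, Finset.mem_univ, true_and] at hS
      exact ⟨hS.2, hS.1⟩
    · intro S hS T hT h
      exact Subtype.ext h
    · intro S hS
      simp only [Finset.mem_filter, Finset.mem_powerset] at hS
      have hne : S.Nonempty := by
        rcases S.eq_empty_or_nonempty with rfl | h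
        · rw [hc0] at hS; exact absurd hS.2 (by decide)
        · exact h
      refine ⟨⟨S, hne⟩, ?_, rfl⟩
      simp [h𝒜, hS.1, hS.2]
  -- the parity of the card is ε X
  have h01 : ∀ a : ZMod 2, a = 0 ∨ a = 1 := by decide
  have hpar : ((X.powerset.filter (fun S => c S = 1)).card : ZMod 2) = ε X := by
    calc ((X.powerset.filter (fun S => c S = 1)).card : ZMod 2)
        = ∑ S ∈ X.powerset, c S := by
          rw [Finset.card_filter]
          push_cast
          refine Finset.sum_congr rfl (fun S _ => ?_)
          rcases h01 (c S) with h | h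
          · simp [h]
          · simp [h]
      _ = ε X := mob ε X
  rw [hcard]
  -- finish
  have hdx : ε X = if d x = 1 then 0 else 1 := by simp only [hε]; rw [hxX]
  set k := (X.powerset.filter (fun S => c S = 1)).card
  rcases hd x with h1 | h1
  · have : (k : ZMod 2) = 0 := by rw [hpar, hdx, if_pos h1]
    have hk : Even k := by
      rw [even_iff_two_dvd]
      exact (ZMod.natCast_eq_zero_iff k 2).mp this
    rw [h1, hk.neg_one_pow]
  · have : (k : ZMod 2) = 1 := by
      rw [hpar, hdx, if_neg (by rw [h1]; norm_num)]
    have hk : Odd k := by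
      rcases Nat.even_or_odd k with he | ho
      · exfalso
        have h0' : (k : ZMod 2) = 0 := by
          rw [ZMod.natCast_eq_zero_iff]
          exact he.two_dvd
        rw [h0'] at this
        exact absurd this (by decide)
      · exact ho
    rw [h1, hk.neg_one_pow]
end

section
/- The decomposition of a diagonal ±1 matrix with leading entry +1 into a product of distinct CZ_S gates is unique: if two subsets 𝒜, ℬ of nonempty subsets of Fin n satisfy ∏_{S ∈ 𝒜} CZ_S = ∏_{S ∈ ℬ} CZ_S, then 𝒜 = ℬ. -/
/-!
The `(x, x)` entry of `∏ S ∈ 𝒜, CZ S` is `(-1) ^ #{S ∈ 𝒜 | S ⊆ supp x}`, so the product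
determines, for every set `T`, the parity of the number of members of `𝒜` contained in `T`.
If `𝒜 ≠ ℬ`, take `T` minimal in `𝒜 ∆ ℬ`: the two families agree on the proper subsets of `T`
and differ at `T` itself, so these parities differ at `T`.
-/

open Finset

namespace Finset

variable {α : Type*} [PartialOrder α] [DecidableEq α] [DecidableLE α]

theorem filter_le_eq_erase_of_forall_lt {𝒜 ℬ : Finset α} {t : α} (htA : t ∈ 𝒜) (htB : t ∉ ℬ)
    (hlt : ∀ s < t, s ∈ 𝒜 ↔ s ∈ ℬ) : {s ∈ ℬ | s ≤ t} = {s ∈ 𝒜 | s ≤ t}.erase t := by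
  ext s
  simp only [mem_filter, mem_erase]
  rcases eq_or_ne s t with rfl | hst
  · simp [htB]
  · have hs : s ≤ t → (s ∈ 𝒜 ↔ s ∈ ℬ) := fun h => hlt s (lt_of_le_of_ne h hst)
    grind

theorem not_even_card_filter_le_iff_of_forall_lt {𝒜 ℬ : Finset α} {t : α} (htA : t ∈ 𝒜)
    (htB : t ∉ ℬ) (hlt : ∀ s < t, s ∈ 𝒜 ↔ s ∈ ℬ) :
    ¬(Even #{s ∈ 𝒜 | s ≤ t} ↔ Even #{s ∈ ℬ | s ≤ t}) := by
  rw [filter_le_eq_erase_of_forall_lt htA htB hlt,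
    ← card_erase_add_one (s := {s ∈ 𝒜 | s ≤ t}) (mem_filter.2 ⟨htA, le_rfl⟩), Nat.even_add_one]
  tauto

theorem eq_of_forall_even_card_filter_le_iff {𝒜 ℬ : Finset α}
    (h : ∀ t, Even #{s ∈ 𝒜 | s ≤ t} ↔ Even #{s ∈ ℬ | s ≤ t}) : 𝒜 = ℬ := by
  by_contra hne
  obtain ⟨t, ht, hmin⟩ := exists_minimal (symmDiff_nonempty.2 hne)
  have hlt : ∀ s < t, s ∈ 𝒜 ↔ s ∈ ℬ := fun s hs => by
    by_contra hs'
    exact hs.not_ge (hmin (mem_symmDiff.2 (by tauto)) hs.le)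
  rcases mem_symmDiff.1 ht with ⟨htA, htB⟩ | ⟨htB, htA⟩
  · exact not_even_card_filter_le_iff_of_forall_lt htA htB hlt (h t)
  · exact not_even_card_filter_le_iff_of_forall_lt htB htA (fun s hs => (hlt s hs).symm) (h t).symm

end Finset

theorem even_iff_even_of_neg_one_pow_eq {R : Type*} [Monoid R] [HasDistribNeg R] {m n : ℕ}
    (hR : (-1 : R) ≠ 1) (h : (-1 : R) ^ m = (-1) ^ n) : Even m ↔ Even n := by
  rw [neg_one_pow_eq_ite, neg_one_pow_eq_ite] at h
  split_ifs at h <;> grind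

theorem noncommProd_CZ_eq_diagonal {ι : Type*} {n : ℕ} (s : Finset ι) (f : ι → Finset (Fin n)) :
    s.noncommProd (fun i => CZ (f i)) (fun i _ j _ _ => CZ_commute (f i) (f j)) =
      Matrix.diagonal fun x => (-1) ^ #{i ∈ s | ∀ j ∈ f i, x j = true} := by
  let d : ι → (Fin n → Bool) → ℂ := fun i x => if ∀ j ∈ f i, x j = true then -1 else 1
  calc s.noncommProd (fun i => CZ (f i)) (fun i _ j _ _ => CZ_commute (f i) (f j))
      = Matrix.diagonalRingHom _ ℂ (s.noncommProd d fun _ _ _ _ _ => Commute.all _ _) :=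
        (map_noncommProd s d _ (Matrix.diagonalRingHom _ ℂ)).symm
    _ = _ := by
        rw [noncommProd_eq_prod, Matrix.diagonalRingHom_apply]
        congr 1
        funext x
        simp only [d, prod_apply, prod_ite, prod_const, one_pow, mul_one]

/-- The decomposition of a diagonal ±1 matrix with leading entry `+1` into a product of
distinct `CZ S` gates is unique: if two sets of nonempty subsets give the same product
of `CZ` gates, the sets coincide. -/
theorem prod_CZ_injective {n : ℕ}
    (𝒜 ℬ : Finset {S : Finset (Fin n) // S.Nonempty})
    (h : 𝒜.noncommProd (fun S => CZ S.1) (fun S _ T _ _ => CZ_commute S.1 T.1) =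
         ℬ.noncommProd (fun S => CZ S.1) (fun S _ T _ _ => CZ_commute S.1 T.1)) :
    𝒜 = ℬ := by
  refine eq_of_forall_even_card_filter_le_iff fun T => ?_
  have hT := congrFun (congrFun h (fun j => decide (j ∈ T.1))) (fun j => decide (j ∈ T.1))
  rw [noncommProd_CZ_eq_diagonal, noncommProd_CZ_eq_diagonal, Matrix.diagonal_apply_eq,
    Matrix.diagonal_apply_eq] at hT
  simpa only [decide_eq_true_eq, ← Subtype.coe_le_coe, subset_iff]
    using even_iff_even_of_neg_one_pow_eq (by norm_num) hT
end

section
/- No gate CZ_T can be expressed as a product of gates CZ_S with S ≠ T: if ∏_{S ∈ 𝒜} CZ_S = CZ_T for a finite set 𝒜 of nonempty subsets of Fin n, then 𝒜 = {T}. -/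
open Finset
open scoped symmDiff

theorem modEq_two_of_neg_one_pow_eq {R : Type*} [Ring R] (h : (-1 : R) ≠ 1) {a b : ℕ}
    (hab : (-1 : R) ^ a = (-1) ^ b) : a ≡ b [MOD 2] := by
  rw [neg_one_pow_eq_pow_mod_two, neg_one_pow_eq_pow_mod_two (n := b)] at hab
  rcases Nat.mod_two_eq_zero_or_one a with ha | ha <;>
    rcases Nat.mod_two_eq_zero_or_one b with hb | hb <;>
    simp_all [Nat.ModEq, eq_comm]

namespace Finset

variable {α : Type*} [DecidableEq α]

theorem card_symmDiff_add_two_mul_card_inter (s t : Finset α) :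
    #(s ∆ t) + 2 * #(s ∩ t) = #s + #t := by
  rw [symmDiff_eq_sup_sdiff_inf, sup_eq_union, inf_eq_inter,
    card_sdiff_of_subset inter_subset_union, ← card_union_add_card_inter]
  have : #(s ∩ t) ≤ #(s ∪ t) := card_le_card inter_subset_union
  omega

theorem even_card_symmDiff_iff (s t : Finset α) : Even #(s ∆ t) ↔ #s ≡ #t [MOD 2] := by
  have := card_symmDiff_add_two_mul_card_inter s t
  rw [Nat.even_iff, Nat.ModEq]
  omega

theorem filter_symmDiff (p : α → Prop) [DecidablePred p] (s t : Finset α) :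
    (s ∆ t).filter p = s.filter p ∆ t.filter p := by
  ext a
  simp only [mem_filter, mem_symmDiff]
  tauto

theorem eq_empty_of_forall_even_card_filter_subset (ℬ : Finset (Finset α))
    (h : ∀ U, Even #{S ∈ ℬ | S ⊆ U}) : ℬ = ∅ := by
  by_contra hne
  obtain ⟨S₀, hS₀, hmin⟩ := exists_min_image ℬ card (nonempty_iff_ne_empty.mpr hne)
  have hS₀_only : {S ∈ ℬ | S ⊆ S₀} = {S₀} := by
    ext S
    simp only [mem_filter, mem_singleton]
    exact ⟨fun ⟨hS, hsub⟩ => eq_of_subset_of_card_le hsub (hmin S hS),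
      by rintro rfl; exact ⟨hS₀, subset_rfl⟩⟩
  simpa [hS₀_only] using h S₀

theorem eq_of_forall_card_filter_subset_modEq_two {ℬ₁ ℬ₂ : Finset (Finset α)}
    (h : ∀ U, #{S ∈ ℬ₁ | S ⊆ U} ≡ #{S ∈ ℬ₂ | S ⊆ U} [MOD 2]) : ℬ₁ = ℬ₂ := by
  rw [← symmDiff_eq_empty]
  refine eq_empty_of_forall_even_card_filter_subset _ fun U => ?_
  rw [filter_symmDiff, even_card_symmDiff_iff]
  exact h U

end Finset

theorem noncommProd_CZ {n : ℕ} {ι : Type*} (s : Finset ι) (f : ι → Finset (Fin n)) (comm) :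
    s.noncommProd (fun i => CZ (f i)) comm =
      Matrix.diagonal fun x => (-1) ^ #{i ∈ s | ∀ j ∈ f i, x j = true} := by
  change s.noncommProd (fun i => Matrix.diagonalRingHom _ ℂ _) comm = _
  rw [← map_noncommProd _ _ fun _ _ _ _ _ => Commute.all _ _, noncommProd_eq_prod]
  refine congrArg Matrix.diagonal (funext fun x => ?_)
  simp [prod_ite]

/-- No gate `CZ T` can be expressed as a product of gates `CZ S` with `S ≠ T`: if a
product of `CZ` gates over a set `𝒜` of nonempty subsets equals `CZ T`, then
`𝒜 = {T}`. -/
theorem prod_CZ_eq_CZ {n : ℕ} (T : Finset (Fin n)) (hT : T.Nonempty)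
    (𝒜 : Finset {S : Finset (Fin n) // S.Nonempty})
    (h : 𝒜.noncommProd (fun S => CZ S.1) (fun S _ T _ _ => CZ_commute S.1 T.1) = CZ T) :
    𝒜 = {⟨T, hT⟩} := by
  rw [← noncommProd_singleton T CZ, noncommProd_CZ,
    noncommProd_CZ 𝒜 Subtype.val fun S _ T _ _ => CZ_commute S.1 T.1] at h
  apply map_injective (Function.Embedding.subtype _)
  rw [map_singleton, Function.Embedding.subtype_apply]
  refine eq_of_forall_card_filter_subset_modEq_two fun U => ?_
  have hU := congr_fun₂ h (fun j => decide (j ∈ U)) (fun j => decide (j ∈ U))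
  simp only [Matrix.diagonal_apply_eq, decide_eq_true_eq] at hU
  have hparity := modEq_two_of_neg_one_pow_eq (by norm_num) hU
  simp only [filter_map, card_map, Function.comp_def, Function.Embedding.subtype_apply, subset_iff]
  exact hparity
end
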